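/- Tsirelson's space T is not iteration stable: there exist type determining sequences (x_n) and (y_n) in T such that lim_n lim_m ∥x_n + y_m∥ does not exist. -/

import Mathlib

/-- Restriction `E x` of a finitely supported sequence `x` to a set `E ⊆ ℕ`. -/
noncomputable def tRes (E : Finset ℕ) (x : ℕ →₀ ℝ) : ℕ →₀ ℝ := x.filter (· ∈ E)

/-- An admissible family for the Tsirelson norm: `n ≤ E_1 < ... < E_n`. -/
def tAdm (n : ℕ) (E : Fin n → Finset ℕ) : Prop :=
  (∀ i : Fin n, ∀ a ∈ E i, n ≤ a) ∧
  (∀ i j : Fin n, i < j → ∀ a ∈ E i, ∀ b ∈ E j, a < b)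

/-- `N` satisfies the implicit equation of the Tsirelson norm:
`‖x‖ = max(‖x‖_∞, sup_{n ≥ 2, n ≤ E_1 < ... < E_n} (1/2) ∑ ‖E_i x‖)`. -/
def tEq (N : (ℕ →₀ ℝ) → ℝ) : Prop :=
  ∀ x : ℕ →₀ ℝ, N x = max (⨆ i : ℕ, |x i|)
    (sSup {s : ℝ | ∃ n : ℕ, 2 ≤ n ∧ ∃ E : Fin n → Finset ℕ, tAdm n E ∧
      s = (1 / 2) * ∑ i, N (tRes (E i) x)})

/-- `‖x‖_k = sup (1/2) ∑_{i=1}^k ‖E_i x‖` over `k ≤ E_1 < ... < E_k`. -/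
noncomputable def tNormk (N : (ℕ →₀ ℝ) → ℝ) (k : ℕ) (x : ℕ →₀ ℝ) : ℝ :=
  sSup {s : ℝ | ∃ E : Fin k → Finset ℕ, tAdm k E ∧
    s = (1 / 2) * ∑ i, N (tRes (E i) x)}

/-- `z_n = (2/n²) ∑_{i=1}^{n²} e_{n³+i}`. -/
noncomputable def zvec (n : ℕ) : ℕ →₀ ℝ :=
  ∑ i ∈ Finset.range (n ^ 2), Finsupp.single (n ^ 3 + i + 1) (2 / (n ^ 2 : ℝ))

/-!
The witnesses are simpler than the paper's: `x_n` alternates between the flat block `z_k`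
(coordinates `2 / k²` on `(k³, k³ + k²]`, `k = n + 2`) and the unit vector `e_{k³}`, and
`y_m = e_m`.

Both sequences have the type of a unit vector moving to infinity. For `b` beyond the support of
`v`, `N (v + e_b)` does not depend on `b`; and a far block `z_k` behaves against `v` like `e_b` up
to `O(1 / k²)`, because an admissible family with a piece meeting the support of `v` has at most
`max (supp v)` pieces, so each piece meeting `z_k` is worth half its `ℓ¹` norm up to one small
coordinate, and all of `z_k` together at most `‖z_k‖₁ / 2 = 1`. Against `e_m` with `m` far beyond,
however, the `k² + 1 ≤ k³ + 1` singletons of `z_k + e_m` are admissible, so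
`N (z_k + e_m) = 3 / 2`, while `N (e_{k³} + e_m) = 1`.
-/

section Tsirelson

open Finsupp Filter Topology

variable {N : (ℕ →₀ ℝ) → ℝ}

theorem tRes_apply (E : Finset ℕ) (x : ℕ →₀ ℝ) (a : ℕ) :
    tRes E x a = if a ∈ E then x a else 0 := rfl

theorem support_tRes (E : Finset ℕ) (x : ℕ →₀ ℝ) :
    (tRes E x).support = x.support.filter (· ∈ E) := rfl

theorem tRes_zero (E : Finset ℕ) : tRes E 0 = 0 := filter_zero _

theorem tRes_add (E : Finset ℕ) (x y : ℕ →₀ ℝ) : tRes E (x + y) = tRes E x + tRes E y :=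
  filter_add

theorem tRes_tRes (E F : Finset ℕ) (x : ℕ →₀ ℝ) : tRes E (tRes F x) = tRes (E ∩ F) x := by
  ext a
  simp only [tRes_apply, Finset.mem_inter]
  split_ifs <;> tauto

theorem tRes_inter_support (E : Finset ℕ) (x : ℕ →₀ ℝ) : tRes (E ∩ x.support) x = tRes E x := by
  ext a
  by_cases ha : x a = 0 <;> simp [tRes_apply, ha]

theorem tRes_eq_self {E : Finset ℕ} {x : ℕ →₀ ℝ} (h : x.support ⊆ E) : tRes E x = x :=
  (filter_eq_self_iff _ _).2 fun _ ha => h (mem_support_iff.2 ha)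

theorem tRes_eq_zero {E : Finset ℕ} {x : ℕ →₀ ℝ} (h : Disjoint x.support E) : tRes E x = 0 :=
  (filter_eq_zero_iff _ _).2 fun _ ha => notMem_support_iff.1 (Finset.disjoint_right.1 h ha)

theorem tRes_add_of_disjoint {E : Finset ℕ} {x y : ℕ →₀ ℝ} (h : Disjoint x.support E) :
    tRes E (x + y) = tRes E y := by
  rw [tRes_add, tRes_eq_zero h, zero_add]

theorem tRes_single_of_mem {E : Finset ℕ} {b : ℕ} (c : ℝ) (h : b ∈ E) :
    tRes E (single b c) = single b c :=
  filter_single_of_pos _ h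

theorem tRes_single_of_notMem {E : Finset ℕ} {b : ℕ} (c : ℝ) (h : b ∉ E) :
    tRes E (single b c) = 0 :=
  filter_single_of_neg _ h

theorem forall_mem_support_single {p : ℕ → Prop} {b : ℕ} (c : ℝ) (hb : p b) :
    ∀ a ∈ (single b c).support, p a :=
  fun _ ha => Finset.mem_singleton.1 (support_single_subset ha) ▸ hb

theorem support_tRes_subset (E : Finset ℕ) (x : ℕ →₀ ℝ) : (tRes E x).support ⊆ x.support :=
  Finset.filter_subset _ _

theorem card_support_tRes_lt {E : Finset ℕ} {x : ℕ →₀ ℝ} (h : ¬ x.support ⊆ E) :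
    (tRes E x).support.card < x.support.card := by
  refine Finset.card_lt_card ⟨support_tRes_subset E x, fun hsub => h fun a ha => ?_⟩
  exact (Finset.mem_filter.1 (hsub ha)).2

def l1 (x : ℕ →₀ ℝ) : ℝ := ∑ a ∈ x.support, |x a|

theorem l1_nonneg (x : ℕ →₀ ℝ) : 0 ≤ l1 x := Finset.sum_nonneg fun _ _ => abs_nonneg _

theorem l1_single (b : ℕ) (c : ℝ) : l1 (single b c) = |c| :=
  sum_single_index (h := fun _ c => |c|) abs_zero

theorem l1_add_of_disjoint {x y : ℕ →₀ ℝ} (h : Disjoint x.support y.support) :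
    l1 (x + y) = l1 x + l1 y :=
  sum_add_index_of_disjoint h _

theorem abs_le_l1 (x : ℕ →₀ ℝ) (a : ℕ) : |x a| ≤ l1 x := by
  by_cases ha : a ∈ x.support
  · exact Finset.single_le_sum (fun c _ => abs_nonneg (x c)) ha
  · rw [notMem_support_iff.1 ha, abs_zero]
    exact l1_nonneg x

theorem l1_tRes (E : Finset ℕ) (x : ℕ →₀ ℝ) :
    l1 (tRes E x) = ∑ a ∈ x.support.filter (· ∈ E), |x a| :=
  Finset.sum_congr rfl fun _ ha => by rw [tRes_apply, if_pos (Finset.mem_filter.1 ha).2]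

theorem l1_tRes_le (E : Finset ℕ) (x : ℕ →₀ ℝ) : l1 (tRes E x) ≤ l1 x := by
  rw [l1_tRes]
  exact Finset.sum_le_sum_of_subset_of_nonneg (Finset.filter_subset _ _)
    fun _ _ _ => abs_nonneg _

section Families

variable {n : ℕ} {E : Fin n → Finset ℕ}

theorem tAdm.mono {F : Fin n → Finset ℕ} (hE : tAdm n E) (h : ∀ i, F i ⊆ E i) : tAdm n F :=
  ⟨fun i a ha => hE.1 i a (h i ha), fun i j hij a ha b hb => hE.2 i j hij a (h i ha) b (h j hb)⟩

theorem tAdm.disjoint (hE : tAdm n E) {i j : Fin n} (hij : i ≠ j) : Disjoint (E i) (E j) := by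
  refine Finset.disjoint_left.2 fun a hai haj => ?_
  rcases hij.lt_or_gt with h | h
  · exact lt_irrefl a (hE.2 i j h a hai a haj)
  · exact lt_irrefl a (hE.2 j i h a haj a hai)

theorem tAdm.sum_l1_tRes_le (hE : tAdm n E) (x : ℕ →₀ ℝ) :
    ∑ i, l1 (tRes (E i) x) ≤ l1 x := by
  simp only [l1_tRes]
  rw [← Finset.sum_biUnion (t := fun i => x.support.filter (· ∈ E i))
    fun i _ j _ hij => Finset.disjoint_left.2 fun a ha hb =>
    Finset.disjoint_left.1 (hE.disjoint hij) (Finset.mem_filter.1 ha).2 (Finset.mem_filter.1 hb).2]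
  exact Finset.sum_le_sum_of_subset_of_nonneg
    (Finset.biUnion_subset.2 fun _ _ => Finset.filter_subset _ _) fun _ _ _ => abs_nonneg _

def graft (E : Fin n → Finset ℕ) (j : Fin n) (W B : Finset ℕ) : Fin n → Finset ℕ :=
  Function.update (fun i => E i ∩ W) j (E j ∩ W ∪ B)

theorem mem_graft {j i : Fin n} {W B : Finset ℕ} {a : ℕ} :
    a ∈ graft E j W B i ↔ a ∈ E i ∧ a ∈ W ∨ i = j ∧ a ∈ B := by
  unfold graft
  rcases eq_or_ne i j with rfl | hij
  · simp
  · simp [hij]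

theorem tAdm.graft (hE : tAdm n E) (j : Fin n) {W B : Finset ℕ}
    (hWB : ∀ a ∈ W, ∀ b ∈ B, a < b) (hB : ∀ b ∈ B, n ≤ b)
    (hlate : ∀ i, j < i → Disjoint (E i) W) : tAdm n (graft E j W B) := by
  refine ⟨fun i a ha => ?_, fun i k hik a ha c hc => ?_⟩
  · rcases mem_graft.1 ha with ⟨ha, -⟩ | ⟨-, ha⟩
    exacts [hE.1 i a ha, hB a ha]
  rcases mem_graft.1 ha with ⟨haE, haW⟩ | ⟨rfl, haB⟩ <;>
    rcases mem_graft.1 hc with ⟨hcE, hcW⟩ | ⟨rfl, hcB⟩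
  · exact hE.2 i k hik a haE c hcE
  · exact hWB a haW c hcB
  · exact absurd hcW (Finset.disjoint_left.1 (hlate k hik) hcE)
  · exact absurd hik (lt_irrefl _)

theorem tRes_graft {w u : ℕ →₀ ℝ} (h : Disjoint w.support u.support) (j i : Fin n) :
    tRes (graft E j w.support u.support i) (w + u) = tRes (E i) w + if i = j then u else 0 := by
  ext a
  have hdis : a ∈ w.support → a ∉ u.support := fun ha => Finset.disjoint_left.1 h ha
  simp only [mem_support_iff, ne_eq] at hdis
  by_cases hw : w a = 0 <;> by_cases hu : u a = 0 <;> split_ifs <;>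
    simp_all [tRes_apply, mem_graft]

end Families

def splitSums (N : (ℕ →₀ ℝ) → ℝ) (x : ℕ →₀ ℝ) : Set ℝ :=
  {s | ∃ n : ℕ, 2 ≤ n ∧ ∃ E : Fin n → Finset ℕ, tAdm n E ∧ s = (1 / 2) * ∑ i, N (tRes (E i) x)}

theorem tEq.eq_max (hN : tEq N) (x : ℕ →₀ ℝ) :
    N x = max (⨆ i : ℕ, |x i|) (sSup (splitSums N x)) :=
  hN x

theorem tEq.nonneg (hN : tEq N) (x : ℕ →₀ ℝ) : 0 ≤ N x := by
  rw [hN.eq_max]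
  exact le_max_of_le_left (Real.iSup_nonneg fun _ => abs_nonneg _)

theorem tEq.map_zero (hN : tEq N) : N 0 = 0 := by
  have hsup : (⨆ i : ℕ, |(0 : ℕ →₀ ℝ) i|) = 0 := by simp
  have hmem : ∀ n : ℕ, (n + 2 : ℝ) / 2 * N 0 ∈ splitSums N 0 := fun n =>
    ⟨n + 2, by omega, fun _ => ∅, ⟨by simp, by simp⟩, by simp [tRes_zero]; ring⟩
  -- if `N 0 > 0` the split sums are unbounded, and `sSup` of an unbounded set is `0`
  by_contra hne
  have hpos : 0 < N 0 := (hN.nonneg 0).lt_of_ne' hne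
  have hunb : ¬ BddAbove (splitSums N 0) := by
    rintro ⟨B, hB⟩
    obtain ⟨n, hn⟩ := exists_nat_gt (2 * B / N 0)
    have := hB (hmem n)
    rw [div_lt_iff₀ hpos] at hn
    nlinarith
  have := hN.eq_max 0
  rw [hsup, Real.sSup_of_not_bddAbove hunb, max_self] at this
  exact hne this

theorem tEq.sum_tRes_of_subset (hN : tEq N) {n : ℕ} {E : Fin n → Finset ℕ} (hE : tAdm n E)
    {x : ℕ →₀ ℝ} {j : Fin n} (hj : x.support ⊆ E j) : ∑ i, N (tRes (E i) x) = N x := by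
  rw [Finset.sum_eq_single j (fun i _ hij => ?_) (by simp), tRes_eq_self hj]
  rw [tRes_eq_zero ((hE.disjoint (Ne.symm hij)).mono_left hj), hN.map_zero]

/-- A piece containing the whole support contributes `N x / 2`, which is absorbed. -/
theorem tEq.le_of_forall (hN : tEq N) {x : ℕ →₀ ℝ} {T : ℝ} (hpt : ∀ a, |x a| ≤ T)
    (hsplit : ∀ n, 2 ≤ n → ∀ E : Fin n → Finset ℕ, tAdm n E → (∀ i, E i ⊆ x.support) →
      (∀ i, ¬ x.support ⊆ E i) → (1 / 2) * ∑ i, N (tRes (E i) x) ≤ T) :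
    N x ≤ T := by
  have hT : 0 ≤ T := (abs_nonneg _).trans (hpt 0)
  have hle : N x ≤ max T (N x / 2) := by
    refine (hN.eq_max x).trans_le (max_le (le_max_of_le_left (Real.iSup_le hpt hT))
      (Real.sSup_le ?_ (le_max_of_le_left hT)))
    rintro s ⟨n, hn, E, hE, rfl⟩
    have hE' : tAdm n fun i => E i ∩ x.support := hE.mono fun i => Finset.inter_subset_left
    simp_rw [← tRes_inter_support (E _) x]
    by_cases hfull : ∃ j, x.support ⊆ E j ∩ x.support
    · obtain ⟨j, hj⟩ := hfull
      rw [hN.sum_tRes_of_subset hE' hj]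
      exact le_max_of_le_right (by linarith)
    · exact le_max_of_le_left (hsplit n hn _ hE' (fun i => Finset.inter_subset_right)
        fun i hi => hfull ⟨i, hi⟩)
  rcases le_max_iff.1 hle with h | h
  · exact h
  · linarith [hN.nonneg x]

theorem tEq.le_l1 (hN : tEq N) (x : ℕ →₀ ℝ) : N x ≤ l1 x := by
  induction hk : x.support.card using Nat.strong_induction_on generalizing x with
  | _ k ih =>
  refine hN.le_of_forall (abs_le_l1 x) fun n _ E hE _ hprop => ?_
  calc (1 / 2) * ∑ i, N (tRes (E i) x) ≤ (1 / 2) * ∑ i, l1 (tRes (E i) x) := by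
        gcongr with i
        exact ih _ (hk ▸ card_support_tRes_lt (hprop i)) _ rfl
    _ ≤ (1 / 2) * l1 x := by gcongr; exact hE.sum_l1_tRes_le x
    _ ≤ l1 x := by linarith [l1_nonneg x]

theorem tEq.half_sum_le_l1 (hN : tEq N) {n : ℕ} {E : Fin n → Finset ℕ} (hE : tAdm n E)
    (x : ℕ →₀ ℝ) : (1 / 2) * ∑ i, N (tRes (E i) x) ≤ l1 x / 2 := by
  have := (Finset.sum_le_sum fun i _ => hN.le_l1 (tRes (E i) x)).trans (hE.sum_l1_tRes_le x)
  linarith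

theorem tEq.half_sum_le (hN : tEq N) {n : ℕ} (hn : 2 ≤ n) {E : Fin n → Finset ℕ}
    (hE : tAdm n E) (x : ℕ →₀ ℝ) : (1 / 2) * ∑ i, N (tRes (E i) x) ≤ N x := by
  have hbdd : BddAbove (splitSums N x) := by
    refine ⟨l1 x / 2, ?_⟩
    rintro s ⟨n, -, E, hE, rfl⟩
    exact hN.half_sum_le_l1 hE x
  rw [hN.eq_max x]
  exact le_max_of_le_right (le_csSup hbdd ⟨n, hn, E, hE, rfl⟩)

theorem tEq.abs_apply_le (hN : tEq N) (x : ℕ →₀ ℝ) (a : ℕ) : |x a| ≤ N x := by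
  rw [hN.eq_max x]
  exact le_max_of_le_left (le_ciSup ⟨l1 x, Set.forall_mem_range.2 (abs_le_l1 x)⟩ a)

theorem tEq.le_max_l1 (hN : tEq N) {x : ℕ →₀ ℝ} {c : ℝ} (hc : ∀ a, |x a| ≤ c) :
    N x ≤ max c (l1 x / 2) :=
  hN.le_of_forall (fun a => le_max_of_le_left (hc a)) fun _ _ _ hE _ _ =>
    le_max_of_le_right (hN.half_sum_le_l1 hE x)

theorem tEq.map_single (hN : tEq N) (b : ℕ) (c : ℝ) : N (single b c) = |c| :=
  le_antisymm (l1_single b c ▸ hN.le_l1 _) (by simpa using hN.abs_apply_le (single b c) b)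

theorem tEq.map_tRes_le (hN : tEq N) (F : Finset ℕ) (x : ℕ →₀ ℝ) : N (tRes F x) ≤ N x := by
  refine hN.le_of_forall (fun a => ?_) fun n hn E hE _ _ => ?_
  · rw [tRes_apply]
    split_ifs
    exacts [hN.abs_apply_le x a, by simpa using hN.nonneg x]
  · simp_rw [tRes_tRes]
    exact hN.half_sum_le hn (hE.mono fun i => Finset.inter_subset_left) x

theorem tEq.le_add_of_disjoint (hN : tEq N) {x y : ℕ →₀ ℝ} (h : Disjoint x.support y.support) :
    N x ≤ N (x + y) := by
  have hx : tRes x.support (x + y) = x := by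
    rw [tRes_add, tRes_eq_self subset_rfl, tRes_eq_zero h.symm, add_zero]
  simpa [hx] using hN.map_tRes_le x.support (x + y)

theorem tEq.map_add_le (hN : tEq N) (x y : ℕ →₀ ℝ) : N (x + y) ≤ N x + N y := by
  induction hk : (x.support ∪ y.support).card using Nat.strong_induction_on generalizing x y with
  | _ k ih =>
  refine hN.le_of_forall (fun a => (abs_add_le _ _).trans
    (add_le_add (hN.abs_apply_le x a) (hN.abs_apply_le y a))) fun n hn E hE _ hprop => ?_
  have hpiece (i) : N (tRes (E i) (x + y)) ≤ N (tRes (E i) x) + N (tRes (E i) y) := by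
    rw [tRes_add]
    refine ih _ (hk ▸ Finset.card_lt_card ?_) _ _ rfl
    rw [support_tRes, support_tRes, ← Finset.filter_union, Finset.filter_ssubset]
    obtain ⟨a, ha, haE⟩ := Finset.not_subset.1 (hprop i)
    exact ⟨a, support_add ha, haE⟩
  calc (1 / 2) * ∑ i, N (tRes (E i) (x + y))
      ≤ (1 / 2) * (∑ i, N (tRes (E i) x) + ∑ i, N (tRes (E i) y)) := by
        rw [← Finset.sum_add_distrib]
        gcongr with i
        exact hpiece i
    _ ≤ N x + N y := by linarith [hN.half_sum_le hn hE x, hN.half_sum_le hn hE y]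

theorem tRes_singleton (c : ℕ) (x : ℕ →₀ ℝ) : tRes {c} x = single c (x c) := by
  ext a
  rcases eq_or_ne a c with rfl | h
  · simp [tRes_apply]
  · simp [tRes_apply, h]

/-- The singletons of the support form an admissible family. -/
theorem tEq.l1_half_le (hN : tEq N) {x : ℕ →₀ ℝ} {k : ℕ} (hk : 2 ≤ k)
    (hcard : x.support.card ≤ k) (hx : ∀ a ∈ x.support, k ≤ a) : l1 x / 2 ≤ N x := by
  set m := x.support.card
  set f := x.support.orderEmbOfFin rfl
  let e : ℕ → Finset ℕ := fun i => if h : i < m then {f ⟨i, h⟩} else ∅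
  have hE : tAdm k fun i => e i := by
    refine ⟨fun i a ha => ?_, fun i j hij a ha b hb => ?_⟩
    · simp only [e] at ha
      split_ifs at ha
      · rw [Finset.mem_singleton.1 ha]
        exact hx _ (x.support.orderEmbOfFin_mem rfl _)
      · simp at ha
    · simp only [e] at ha hb
      split_ifs at ha hb <;> simp only [Finset.mem_singleton, Finset.notMem_empty] at ha hb
      rw [ha, hb]
      exact f.strictMono (Fin.mk_lt_mk.2 hij)
  have hsum : ∑ i : Fin k, N (tRes (e i) x) = l1 x := by
    rw [Fin.sum_univ_eq_sum_range (fun i => N (tRes (e i) x)),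
      ← Finset.sum_range_add_sum_Ico _ hcard, Finset.sum_eq_zero (s := Finset.Ico m k), add_zero,
      ← Fin.sum_univ_eq_sum_range (fun i => N (tRes (e i) x)), l1,
      ← x.support.map_orderEmbOfFin_univ rfl, Finset.sum_map]
    · refine Finset.sum_congr rfl fun i _ => ?_
      simp [e, tRes_singleton, hN.map_single, f]
    · intro i hi
      simp [e, not_lt.2 (Finset.mem_Ico.1 hi).1, tRes_eq_zero, hN.map_zero]
  linarith [hN.half_sum_le hk hE x]

section Tail

theorem abs_tRes_apply_le (E : Finset ℕ) (x : ℕ →₀ ℝ) (a : ℕ) : |tRes E x a| ≤ |x a| := by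
  rw [tRes_apply]
  split_ifs <;> simp

theorem card_support_tRes_add_lt {E : Finset ℕ} {x y : ℕ →₀ ℝ} (h : ¬ (x + y).support ⊆ E) :
    (tRes E x).support.card + (tRes E y).support.card < x.support.card + y.support.card := by
  have hx := Finset.card_le_card (support_tRes_subset E x)
  have hy := Finset.card_le_card (support_tRes_subset E y)
  obtain ⟨a, ha, haE⟩ := Finset.not_subset.1 h
  rcases Finset.mem_union.1 (support_add ha) with hax | hay
  · have := card_support_tRes_lt fun hs : x.support ⊆ E => haE (hs hax)
    omega
  · have := card_support_tRes_lt fun hs : y.support ⊆ E => haE (hs hay)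
    omega

theorem tAdm.le_of_mem_of_lt {n : ℕ} {E : Fin n → Finset ℕ} (hE : tAdm n E) {i k : Fin n}
    {a d : ℕ} (ha : a ∈ E i) (hd : d ∈ E k) (hda : d < a) : k ≤ i :=
  not_lt.1 fun hik => (hE.2 i k hik a ha d hd).not_gt hda

theorem tAdm.disjoint_of_lt {n : ℕ} {E : Fin n → Finset ℕ} (hE : tAdm n E) {j : Fin n} {a : ℕ}
    (ha : a ∈ E j) {W : Finset ℕ} (hW : ∀ d ∈ W, d < a) (i : Fin n) (hji : j < i) :
    Disjoint (E i) W :=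
  Finset.disjoint_left.2 fun _ hd hdW => (hE.le_of_mem_of_lt ha hd (hW _ hdW)).not_gt hji

theorem tAdm.eq_of_not_disjoint {n : ℕ} {E : Fin n → Finset ℕ} (hE : tAdm n E) {i j : Fin n}
    {W U : Finset ℕ} (hWU : ∀ d ∈ W, ∀ a ∈ U, d < a) (hiW : ¬ Disjoint (E i) W)
    (hiU : ¬ Disjoint (E i) U) (hjW : ¬ Disjoint (E j) W) (hjU : ¬ Disjoint (E j) U) : i = j := by
  obtain ⟨d, hdE, hdW⟩ := Finset.not_disjoint_iff.1 hiW
  obtain ⟨a, haE, haU⟩ := Finset.not_disjoint_iff.1 hiU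
  obtain ⟨d', hdE', hdW'⟩ := Finset.not_disjoint_iff.1 hjW
  obtain ⟨a', haE', haU'⟩ := Finset.not_disjoint_iff.1 hjU
  exact le_antisymm (hE.le_of_mem_of_lt haE' hdE (hWU d hdW a' haU'))
    (hE.le_of_mem_of_lt haE hdE' (hWU d' hdW' a haU))

theorem tEq.le_l1_half_add (hN : tEq N) {x : ℕ →₀ ℝ} {δ : ℝ} (hδ : ∀ a, |x a| ≤ δ) :
    N x ≤ l1 x / 2 + δ := by
  have hδ0 : 0 ≤ δ := (abs_nonneg _).trans (hδ 0)
  exact (hN.le_max_l1 hδ).trans (max_le (by linarith [l1_nonneg x]) (by linarith))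

/-- The grafted family is admissible because a piece meeting `w` bounds the number of pieces by
the support of `w`, which lies below the tail `u`. -/
theorem tEq.half_sum_graft_le (hN : tEq N) {M : ℕ} {w u : ℕ →₀ ℝ}
    (hw : ∀ a ∈ w.support, a < M) (hu : ∀ a ∈ u.support, M ≤ a)
    {n : ℕ} (hn : 2 ≤ n) {E : Fin n → Finset ℕ} (hE : tAdm n E) (j : Fin n)
    (hlate : ∀ i, j < i → Disjoint (E i) w.support) (hmeet : ∃ i, ¬ Disjoint (E i) w.support) :
    (1 / 2) * ∑ i, N (tRes (E i) w + if i = j then u else 0) ≤ N (w + u) := by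
  have hwu : Disjoint w.support u.support :=
    Finset.disjoint_left.2 fun a ha hau => (hw a ha).not_ge (hu a hau)
  obtain ⟨i₀, hi₀⟩ := hmeet
  obtain ⟨d, hdE, hdw⟩ := Finset.not_disjoint_iff.1 hi₀
  have hG := hE.graft j (W := w.support) (B := u.support)
    (fun a ha b hb => (hw a ha).trans_le (hu b hb))
    (fun b hb => (hE.1 i₀ d hdE).trans ((hw d hdw).le.trans (hu b hb))) hlate
  simpa only [tRes_graft hwu] using hN.half_sum_le hn hG (w + u)

theorem tEq.add_single_le_add (hN : tEq N) {M b : ℕ} {u : ℕ →₀ ℝ} (hb : M ≤ b)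
    (hu : ∀ a ∈ u.support, M ≤ a) (hu1 : 1 ≤ N u) (w : ℕ →₀ ℝ)
    (hw : ∀ a ∈ w.support, a < M) : N (w + single b 1) ≤ N (w + u) := by
  induction hk : w.support.card using Nat.strong_induction_on generalizing w with
  | _ k ih =>
  have hbw : b ∉ w.support := fun h => (hw b h).not_ge hb
  have hwu : Disjoint w.support u.support :=
    Finset.disjoint_left.2 fun a ha hau => (hw a ha).not_ge (hu a hau)
  have hwT : N w ≤ N (w + u) := hN.le_add_of_disjoint hwu
  have huT : 1 ≤ N (w + u) := hu1.trans (add_comm u w ▸ hN.le_add_of_disjoint hwu.symm)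
  refine hN.le_of_forall (fun a => ?_) fun n hn E hE _ hprop => ?_
  · rcases eq_or_ne a b with rfl | hab
    · simpa [notMem_support_iff.1 hbw] using huT
    · simpa [single_apply, Ne.symm hab] using (hN.abs_apply_le w a).trans hwT
  by_cases hbE : ∃ j, b ∈ E j
  swap
  · have hE' (i) : tRes (E i) (w + single b 1) = tRes (E i) w := by
      rw [tRes_add, tRes_single_of_notMem _ fun h => hbE ⟨i, h⟩, add_zero]
    simp only [hE']
    exact (hN.half_sum_le hn hE w).trans hwT
  obtain ⟨j, hj⟩ := hbE
  by_cases hmeet : ∃ i, ¬ Disjoint (E i) w.support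
  swap
  · simp only [not_exists, not_not] at hmeet
    simp only [tRes_add_of_disjoint (hmeet _).symm]
    refine (hN.half_sum_le hn hE _).trans ?_
    rwa [hN.map_single, abs_one]
  refine le_trans ?_ (hN.half_sum_graft_le hw hu hn hE j
    (hE.disjoint_of_lt hj fun d hd => (hw d hd).trans_le hb) hmeet)
  gcongr with i
  rcases eq_or_ne i j with rfl | hij
  · rw [if_pos rfl, tRes_add, tRes_single_of_mem _ hj]
    refine ih _ (hk ▸ card_support_tRes_lt fun hwE => hprop i fun a ha => ?_) _
      (fun a ha => hw a (support_tRes_subset _ _ ha)) rfl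
    rcases Finset.mem_union.1 (support_add ha) with h | h
    · exact hwE h
    · rwa [Finset.mem_singleton.1 (support_single_subset h)]
  · rw [if_neg hij, add_zero, tRes_add,
      tRes_single_of_notMem _ (Finset.disjoint_left.1 (hE.disjoint (Ne.symm hij)) hj), add_zero]

variable {M b : ℕ} {δ c : ℝ} {w u : ℕ →₀ ℝ}

/-- If some piece sees only the tail `u`, every piece is bounded by the triangle inequality and
the total `ℓ¹` mass of `u` is moved to that piece, where it becomes the coordinate `c` at `b`. -/
theorem tEq.half_sum_le_of_pure (hN : tEq N) (hb : M ≤ b) (hw : ∀ a ∈ w.support, a < M)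
    (hu : ∀ a ∈ u.support, M ≤ a) (hδ : ∀ a, |u a| ≤ δ) (hc : l1 u / 2 ≤ c)
    {n : ℕ} (hn : 2 ≤ n) {E : Fin n → Finset ℕ} (hE : tAdm n E)
    (hmeet : ∃ i, ¬ Disjoint (E i) w.support) {q : Fin n}
    (hqw : Disjoint (E q) w.support) (hqu : ¬ Disjoint (E q) u.support) :
    (1 / 2) * ∑ i, N (tRes (E i) (w + u)) ≤ N (w + single b c) + M * δ / 2 := by
  obtain ⟨i₀, hi₀⟩ := hmeet
  obtain ⟨d, hdE, hdw⟩ := Finset.not_disjoint_iff.1 hi₀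
  obtain ⟨a, haE, hau⟩ := Finset.not_disjoint_iff.1 hqu
  have hc0 : 0 ≤ c := by linarith [l1_nonneg u]
  have hnM : (n : ℝ) ≤ M := by exact_mod_cast ((hE.1 i₀ d hdE).trans_lt (hw d hdw)).le
  have hgraft := hN.half_sum_graft_le hw (u := single b c)
    (forall_mem_support_single c hb) hn hE q
    (hE.disjoint_of_lt haE fun d hd => (hw d hd).trans_le (hu a hau)) ⟨i₀, hi₀⟩
  have htarget (i) : N (tRes (E i) w + if i = q then single b c else 0) =
      N (tRes (E i) w) + if i = q then c else 0 := by
    rcases eq_or_ne i q with rfl | hiq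
    · simp [tRes_eq_zero hqw.symm, hN.map_single, hN.map_zero, abs_of_nonneg hc0]
    · simp [hiq]
  have hpiece (i) : N (tRes (E i) (w + u)) ≤ N (tRes (E i) w) + (l1 (tRes (E i) u) / 2 + δ) := by
    rw [tRes_add]
    exact (hN.map_add_le _ _).trans (add_le_add_right
      (hN.le_l1_half_add fun a => (abs_tRes_apply_le _ _ _).trans (hδ a)) _)
  have hsum := Finset.sum_le_sum fun i (_ : i ∈ Finset.univ) => hpiece i
  simp only [htarget, Finset.sum_add_distrib, Finset.sum_ite_eq', Finset.mem_univ, if_true,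
    Finset.sum_const, Finset.card_univ, Fintype.card_fin, nsmul_eq_mul, ← Finset.sum_div]
    at hsum hgraft
  have hnδ : (n : ℝ) * δ ≤ M * δ :=
    mul_le_mul_of_nonneg_right hnM ((abs_nonneg _).trans (hδ 0))
  linarith [hE.sum_l1_tRes_le u]

theorem tEq.half_sum_le_of_straddle (hN : tEq N) (hb : M ≤ b) (hw : ∀ a ∈ w.support, a < M)
    (hu : ∀ a ∈ u.support, M ≤ a) {n : ℕ} (hn : 2 ≤ n) {E : Fin n → Finset ℕ} (hE : tAdm n E)
    (hmeet : ∃ i, ¬ Disjoint (E i) w.support) {j : Fin n} (hj : ¬ Disjoint (E j) u.support)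
    (honly : ∀ i, i ≠ j → Disjoint (E i) u.support) {ε : ℝ}
    (hjε : N (tRes (E j) w + tRes (E j) u) ≤ N (tRes (E j) w + single b c) + ε) :
    (1 / 2) * ∑ i, N (tRes (E i) (w + u)) ≤ N (w + single b c) + ε / 2 := by
  obtain ⟨a, haE, hau⟩ := Finset.not_disjoint_iff.1 hj
  have hpiece (i) : N (tRes (E i) (w + u)) ≤
      N (tRes (E i) w + if i = j then single b c else 0) + if i = j then ε else 0 := by
    rw [tRes_add]
    rcases eq_or_ne i j with rfl | hij
    · rwa [if_pos rfl, if_pos rfl]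
    · simp [hij, tRes_eq_zero (honly i hij).symm]
  have hsum := Finset.sum_le_sum fun i (_ : i ∈ Finset.univ) => hpiece i
  rw [Finset.sum_add_distrib, Finset.sum_ite_eq' Finset.univ j, if_pos (Finset.mem_univ j)]
    at hsum
  have := hN.half_sum_graft_le hw (forall_mem_support_single c hb) hn hE j
    (hE.disjoint_of_lt haE fun d hd => (hw d hd).trans_le (hu a hau)) hmeet
  linarith

theorem tEq.add_le_add_single (hN : tEq N) (hb : M ≤ b) (w u : ℕ →₀ ℝ)
    (hw : ∀ a ∈ w.support, a < M) (hu : ∀ a ∈ u.support, M ≤ a) (hδ : ∀ a, |u a| ≤ δ)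
    (hc : l1 u / 2 ≤ c) : N (w + u) ≤ N (w + single b c) + (M + 1) * δ := by
  induction hk : w.support.card + u.support.card using Nat.strong_induction_on
    generalizing w u with
  | _ k ih =>
  have hδ0 : 0 ≤ δ := (abs_nonneg _).trans (hδ 0)
  have hbw : b ∉ w.support := fun h => (hw b h).not_ge hb
  have hwT : N w ≤ N (w + single b c) :=
    hN.le_add_of_disjoint (Finset.disjoint_right.2 (forall_mem_support_single c hbw))
  have hcT : c ≤ N (w + single b c) := (le_abs_self c).trans
    (by simpa [notMem_support_iff.1 hbw] using hN.abs_apply_le (w + single b c) b)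
  have hMδ : δ ≤ (M + 1) * δ := le_mul_of_one_le_left hδ0 (by linarith [M.cast_nonneg (α := ℝ)])
  refine hN.le_of_forall (fun a => ?_) fun n hn E hE _ hprop => ?_
  · calc |(w + u) a| ≤ |w a| + |u a| := abs_add_le _ _
      _ ≤ N (w + single b c) + (M + 1) * δ :=
        add_le_add ((hN.abs_apply_le w a).trans hwT) ((hδ a).trans hMδ)
  by_cases hmeet : ∃ i, ¬ Disjoint (E i) w.support
  swap
  · simp only [not_exists, not_not] at hmeet
    simp only [tRes_add_of_disjoint (hmeet _).symm]
    linarith [hN.half_sum_le_l1 hE u]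
  by_cases hpure : ∃ q, Disjoint (E q) w.support ∧ ¬ Disjoint (E q) u.support
  · obtain ⟨q, hqw, hqu⟩ := hpure
    have := hN.half_sum_le_of_pure hb hw hu hδ hc hn hE hmeet hqw hqu
    linarith
  by_cases hstr : ∃ j, ¬ Disjoint (E j) u.support
  swap
  · simp only [not_exists, not_not] at hstr
    simp only [tRes_add, tRes_eq_zero (hstr _).symm, add_zero]
    linarith [hN.half_sum_le hn hE w]
  obtain ⟨j, hj⟩ := hstr
  have hmixed (i) (hi : ¬ Disjoint (E i) u.support) : ¬ Disjoint (E i) w.support :=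
    fun h => hpure ⟨i, h, hi⟩
  have honly (i) (hij : i ≠ j) : Disjoint (E i) u.support := by
    by_contra hi
    exact hij (hE.eq_of_not_disjoint (fun d hd a ha => (hw d hd).trans_le (hu a ha))
      (hmixed i hi) hi (hmixed j hj) hj)
  have := hN.half_sum_le_of_straddle hb hw hu hn hE hmeet hj honly <|
    ih _ (hk ▸ card_support_tRes_add_lt (hprop j)) _ _
      (fun a ha => hw a (support_tRes_subset _ _ ha))
      (fun a ha => hu a (support_tRes_subset _ _ ha))
      (fun a => (abs_tRes_apply_le _ _ _).trans (hδ a))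
      ((div_le_div_of_nonneg_right (l1_tRes_le _ _) zero_le_two).trans hc) rfl
  linarith

end Tail

theorem zvec_apply (k a : ℕ) :
    zvec k a = if a ∈ Finset.Ioc (k ^ 3) (k ^ 3 + k ^ 2) then 2 / (k ^ 2 : ℝ) else 0 := by
  simp only [zvec, finsetSum_apply, single_apply]
  split_ifs with ha
  · rw [Finset.sum_eq_single (a - k ^ 3 - 1)]
    · rw [if_pos (by simp at ha; omega)]
    · intro i _ hi
      rw [if_neg (by omega)]
    · simp at ha ⊢
      omega
  · refine Finset.sum_eq_zero fun i hi => if_neg fun h => ha ?_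
    simp at hi ⊢
    omega

theorem abs_zvec_apply_le (k a : ℕ) : |zvec k a| ≤ 2 / (k ^ 2 : ℝ) := by
  rw [zvec_apply]
  split_ifs
  · rw [abs_of_nonneg (by positivity)]
  · simp only [abs_zero]
    positivity

theorem support_zvec {k : ℕ} (hk : k ≠ 0) :
    (zvec k).support = Finset.Ioc (k ^ 3) (k ^ 3 + k ^ 2) := by
  ext a
  rw [mem_support_iff, zvec_apply]
  split_ifs with ha <;> simp [ha, hk]

theorem l1_zvec {k : ℕ} (hk : k ≠ 0) : l1 (zvec k) = 2 := by
  rw [l1, support_zvec hk, Finset.sum_congr rfl fun a ha => by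
    rw [zvec_apply, if_pos ha, abs_of_nonneg (by positivity)]]
  simp only [Finset.sum_const, Nat.card_Ioc, Nat.add_sub_cancel_left, nsmul_eq_mul]
  push_cast
  field_simp

theorem tEq.one_le_zvec (hN : tEq N) {k : ℕ} (hk : 2 ≤ k) : 1 ≤ N (zvec k) := by
  have hk3 : k ^ 2 ≤ k ^ 3 := Nat.pow_le_pow_right (by omega) (by omega)
  have hk2 : 2 ^ 2 ≤ k ^ 2 := Nat.pow_le_pow_left hk 2
  have := hN.l1_half_le (x := zvec k) (k := k ^ 3 + 1) (by omega)
    (by rw [support_zvec (by omega)]; simp; omega)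
    (fun a ha => by rw [support_zvec (by omega)] at ha; exact (Finset.mem_Ioc.1 ha).1)
  rw [l1_zvec (by omega)] at this
  linarith

theorem tEq.add_single_eq (hN : tEq N) {M b b' : ℕ} {w : ℕ →₀ ℝ} (hw : ∀ a ∈ w.support, a < M)
    (hb : M ≤ b) (hb' : M ≤ b') : N (w + single b 1) = N (w + single b' 1) := by
  have key {b b' : ℕ} (hb : M ≤ b) (hb' : M ≤ b') : N (w + single b 1) ≤ N (w + single b' 1) :=
    hN.add_single_le_add hb
      (forall_mem_support_single 1 hb')
      (by rw [hN.map_single, abs_one]) w hw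
  exact le_antisymm (key hb hb') (key hb' hb)

theorem lt_sup_support_add_one (v : ℕ →₀ ℝ) : ∀ a ∈ v.support, a < v.support.sup id + 1 :=
  fun _ ha => Nat.lt_succ_of_le (Finset.le_sup (f := id) ha)

theorem tEq.tendsto_add_single (hN : tEq N) (v : ℕ →₀ ℝ) :
    Tendsto (fun m => N (v + single m 1)) atTop
      (𝓝 (N (v + single (v.support.sup id + 1) 1))) :=
  tendsto_const_nhds.congr' <| eventually_atTop.2
    ⟨_, fun _ hm => hN.add_single_eq (lt_sup_support_add_one v) le_rfl hm⟩

noncomputable def xseq (n : ℕ) : ℕ →₀ ℝ :=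
  if Even n then zvec (n + 2) else single ((n + 2) ^ 3) 1

theorem tEq.add_xseq_mem_Icc (hN : tEq N) {v : ℕ →₀ ℝ} {M n : ℕ}
    (hv : ∀ a ∈ v.support, a < M) (hn : M ≤ n) :
    N (v + xseq n) ∈ Set.Icc (N (v + single M 1))
      (N (v + single M 1) + (M + 1) * (2 / ((n + 2 : ℕ) : ℝ) ^ 2)) := by
  have hM : M ≤ (n + 2) ^ 3 :=
    hn.trans ((by omega : n ≤ n + 2).trans (le_self_pow (by omega) three_ne_zero))
  have herr : 0 ≤ ((M : ℝ) + 1) * (2 / ((n + 2 : ℕ) : ℝ) ^ 2) := by positivity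
  unfold xseq
  split_ifs
  · have hu (a) (ha : a ∈ (zvec (n + 2)).support) : M ≤ a := by
      rw [support_zvec (by omega)] at ha
      exact hM.trans (Finset.mem_Ioc.1 ha).1.le
    exact ⟨hN.add_single_le_add le_rfl hu (hN.one_le_zvec (by omega)) v hv,
      hN.add_le_add_single le_rfl v _ hv hu (abs_zvec_apply_le _)
        (by rw [l1_zvec (by omega)]; norm_num)⟩
  · rw [hN.add_single_eq hv hM le_rfl]
    exact ⟨le_rfl, le_add_of_nonneg_right herr⟩

theorem tEq.tendsto_add_xseq (hN : tEq N) (v : ℕ →₀ ℝ) :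
    Tendsto (fun n => N (v + xseq n)) atTop (𝓝 (N (v + single (v.support.sup id + 1) 1))) := by
  set M := v.support.sup id + 1
  have hsq : Tendsto (fun n : ℕ => ((n + 2 : ℕ) : ℝ) ^ 2) atTop atTop :=
    (tendsto_pow_atTop two_ne_zero).comp
      (tendsto_natCast_atTop_atTop.comp (tendsto_add_atTop_nat 2))
  have herr : Tendsto (fun n : ℕ => N (v + single M 1) + (M + 1) * (2 / ((n + 2 : ℕ) : ℝ) ^ 2))
      atTop (𝓝 (N (v + single M 1))) := by
    simpa using tendsto_const_nhds.add (tendsto_const_nhds.mul (hsq.const_div_atTop 2))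
  have hev := eventually_atTop.2 ⟨M, fun n hn => hN.add_xseq_mem_Icc (lt_sup_support_add_one v) hn⟩
  exact tendsto_of_tendsto_of_tendsto_of_le_of_le' tendsto_const_nhds herr
    (hev.mono fun _ h => h.1) (hev.mono fun _ h => h.2)

theorem tEq.zvec_add_single (hN : tEq N) {k m : ℕ} (hk : 2 ≤ k) (hm : k ^ 3 + k ^ 2 < m) :
    N (zvec k + single m 1) = 3 / 2 := by
  have hmz : m ∉ (zvec k).support := by
    rw [support_zvec (by omega), Finset.mem_Ioc]
    omega
  have hdisj : Disjoint (zvec k).support (single m (1 : ℝ)).support :=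
    Finset.disjoint_right.2 (forall_mem_support_single 1 hmz)
  have hl1 : l1 (zvec k + single m 1) = 3 := by
    rw [l1_add_of_disjoint hdisj, l1_zvec (by omega), l1_single]
    norm_num
  refine le_antisymm ((hN.le_max_l1 (c := 1) fun a => ?_).trans (by rw [hl1]; norm_num)) ?_
  · rcases eq_or_ne a m with rfl | ham
    · simp [notMem_support_iff.1 hmz]
    · have hsmall : (2 : ℝ) / (k : ℝ) ^ 2 ≤ 1 := by
        rw [div_le_one (by positivity)]
        have : (2 : ℝ) ≤ k := by exact_mod_cast hk
        nlinarith
      simpa [single_apply, Ne.symm ham] using (abs_zvec_apply_le k a).trans hsmall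
  have hk3 : k ^ 2 ≤ k ^ 3 := Nat.pow_le_pow_right (by omega) (by omega)
  have hk2 : 2 ^ 2 ≤ k ^ 2 := Nat.pow_le_pow_left hk 2
  have := hN.l1_half_le (x := zvec k + single m 1) (k := k ^ 3 + 1) (by omega) ?_ ?_
  · linarith
  · rw [support_add_eq hdisj, Finset.card_union_of_disjoint hdisj, support_zvec (by omega),
      support_single _ one_ne_zero]
    simp
    omega
  · intro a ha
    rcases Finset.mem_union.1 (support_add ha) with h | h
    · rw [support_zvec (by omega)] at h
      exact (Finset.mem_Ioc.1 h).1
    · rw [Finset.mem_singleton.1 (support_single_subset h)]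
      omega

theorem tEq.single_add_single (hN : tEq N) {b m : ℕ} (hbm : b ≠ m) :
    N (single b 1 + single m 1) = 1 := by
  refine le_antisymm ((hN.le_max_l1 (c := 1) fun a => ?_).trans ?_) ?_
  · by_cases h1 : b = a <;> by_cases h2 : m = a <;> simp_all
  · rw [l1_add_of_disjoint (by simp [hbm]), l1_single, l1_single]
    norm_num
  · have := hN.abs_apply_le (single b 1 + single m 1) b
    rwa [Finsupp.add_apply, single_eq_same, single_eq_of_ne hbm, add_zero, abs_one] at this

theorem tEq.xseq_add_single (hN : tEq N) {n m : ℕ} (hm : (n + 2) ^ 3 + (n + 2) ^ 2 < m) :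
    N (xseq n + single m 1) = if Even n then 3 / 2 else 1 := by
  unfold xseq
  split_ifs
  exacts [hN.zvec_add_single (by omega) hm, hN.single_add_single (by omega)]

theorem tEq.tendsto_xseq_add_single (hN : tEq N) (n : ℕ) :
    Tendsto (fun m => N (xseq n + single m 1)) atTop (𝓝 (if Even n then 3 / 2 else 1)) :=
  tendsto_const_nhds.congr' <| eventually_atTop.2
    ⟨_, fun _ hm => (hN.xseq_add_single (Nat.lt_of_succ_le hm)).symm⟩

theorem not_tendsto_ite_even {a b : ℝ} (hab : a ≠ b) (L : ℝ) :
    ¬ Tendsto (fun n : ℕ => if Even n then a else b) atTop (𝓝 L) := by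
  intro h
  have h2 : Tendsto (fun k : ℕ => 2 * k) atTop atTop := tendsto_id.const_mul_atTop' two_pos
  have he := h.comp h2
  have ho := h.comp ((tendsto_add_atTop_nat 1).comp h2)
  simp only [Function.comp_def, even_two_mul, if_true, Nat.even_add_one, not_true_eq_false,
    if_false] at he ho
  exact hab ((tendsto_const_nhds_iff.1 he).trans (tendsto_const_nhds_iff.1 ho).symm)

end Tsirelson

/-- Tsirelson's space `T` is not iteration stable: there exist
type determining sequences `(x_n)`, `(y_n)` such that `lim_n lim_m ‖x_n + y_m‖`
does not exist (the inner limits exist, the outer one does not). -/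
theorem stmt13 (N : (ℕ →₀ ℝ) → ℝ) (hN : tEq N) :
    ∃ x y : ℕ → (ℕ →₀ ℝ),
      (∀ v : ℕ →₀ ℝ, ∃ L : ℝ,
        Filter.Tendsto (fun n => N (v + x n)) Filter.atTop (nhds L)) ∧
      (∀ v : ℕ →₀ ℝ, ∃ L : ℝ,
        Filter.Tendsto (fun n => N (v + y n)) Filter.atTop (nhds L)) ∧
      ∃ g : ℕ → ℝ,
        (∀ n, Filter.Tendsto (fun m => N (x n + y m)) Filter.atTop (nhds (g n))) ∧
        ¬ ∃ L : ℝ, Filter.Tendsto g Filter.atTop (nhds L) :=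
  ⟨xseq, fun m => Finsupp.single m 1, fun v => ⟨_, hN.tendsto_add_xseq v⟩,
    fun v => ⟨_, hN.tendsto_add_single v⟩, fun n => if Even n then 3 / 2 else 1,
    hN.tendsto_xseq_add_single, fun ⟨L, hL⟩ => not_tendsto_ite_even (by norm_num) L hL⟩
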